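/- Let R be a Jacobi-diagonalizable Jacobi-orthogonal algebraic curvature tensor on a scalar product space (V, g) such that for every nonnull X ∈ V the Jacobi operator J_X has no null eigenvectors (i.e., every eigenvector W of J_X satisfies g(W, W) ≠ 0). Then R is Jacobi-dual. -/

import Mathlib

/-!
Write `ε_Z = g(Z, Z)`. One reduces to `Y ⊥ X`: if `λ ≠ 0` this is automatic, since
`g(J_X Y, X) = 0`; if `λ = 0`, shifting `Y` by a multiple of `X` changes neither `J_X Y` nor
`J_Y X`. Then `ε_Y ≠ 0` and `U := J_Y X` satisfies `g(U, X) = ε_X ε_Y λ`. Jacobi-orthogonality,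
extended to nonnull orthogonal pairs by rescaling, gives two more facts. On a suitable
orthogonal pair in the plane of `X` and `Y` it yields `g(U, U) = ε_X ε_Y² λ²`. On the pairs
`(X, Y + s V)` with `V ⊥ X` it makes a cubic in `s` vanish for all but finitely many `s`, and its
linear coefficient gives `g(U, J_X V) = ε_X λ g(U, V)`. Together these show that
`W = U - ε_Y λ X` is an eigenvector of `J_X` with `g(W, W) = 0`, so `W = 0`.
-/

/- Common definitions: scalar product space (V, g) with nondegenerate symmetric bilinear
form g, algebraic curvature tensors, Jacobi operators, and derived notions. -/

variable {V : Type*} [AddCommGroup V] [Module ℝ V]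

/-- `R` is quadrilinear and satisfies the symmetries of an algebraic curvature tensor. -/
def IsCurv (R : V → V → V → V → ℝ) : Prop :=
  (∀ (a : ℝ) (X X' Y Z W : V), R (a • X + X') Y Z W = a * R X Y Z W + R X' Y Z W) ∧
  (∀ (a : ℝ) (X Y Y' Z W : V), R X (a • Y + Y') Z W = a * R X Y Z W + R X Y' Z W) ∧
  (∀ (a : ℝ) (X Y Z Z' W : V), R X Y (a • Z + Z') W = a * R X Y Z W + R X Y Z' W) ∧
  (∀ (a : ℝ) (X Y Z W W' : V), R X Y Z (a • W + W') = a * R X Y Z W + R X Y Z W') ∧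
  (∀ X Y Z W : V, R X Y Z W = - R Y X Z W) ∧
  (∀ X Y Z W : V, R X Y Z W = - R X Y W Z) ∧
  (∀ X Y Z W : V, R X Y Z W = R Z W X Y) ∧
  (∀ X Y Z W : V, R X Y Z W + R Y Z X W + R Z X Y W = 0)

/-- `J X` is the Jacobi operator of `R`: the unique linear map with
`g (J X Y) Z = R Y X X Z` for all `Y Z`. -/
def IsJacobi (g : V →ₗ[ℝ] V →ₗ[ℝ] ℝ) (R : V → V → V → V → ℝ) (J : V → V →ₗ[ℝ] V) : Prop :=
  ∀ X Y Z : V, g (J X Y) Z = R Y X X Z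

/-- Jacobi-orthogonality: `g (J_X Y) (J_Y X) = 0` for all mutually orthogonal unit `X Y`. -/
def JacobiOrthogonal (g : V →ₗ[ℝ] V →ₗ[ℝ] ℝ) (J : V → V →ₗ[ℝ] V) : Prop :=
  ∀ X Y : V, (g X X = 1 ∨ g X X = -1) → (g Y Y = 1 ∨ g Y Y = -1) → g X Y = 0 →
    g (J X Y) (J Y X) = 0
/-- Jacobi-duality. -/
def JacobiDual (g : V →ₗ[ℝ] V →ₗ[ℝ] ℝ) (J : V → V →ₗ[ℝ] V) : Prop :=
  ∀ (X Y : V) (l : ℝ), g X X ≠ 0 → J X Y = (g X X * l) • Y → J Y X = (g Y Y * l) • X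
/-- An endomorphism is diagonalizable iff its eigenspaces span. -/
def IsDiagonalizable (f : V →ₗ[ℝ] V) : Prop :=
  (⨆ μ : ℝ, Module.End.eigenspace f μ) = ⊤

/-- `R` (via its Jacobi operator `J`) is Jacobi-diagonalizable. -/
def JacobiDiagonalizable (g : V →ₗ[ℝ] V →ₗ[ℝ] ℝ) (J : V → V →ₗ[ℝ] V) : Prop :=
  ∀ X : V, g X X ≠ 0 → IsDiagonalizable (J X)


namespace IsCurv

variable {R : V → V → V → V → ℝ}

theorem add₁ (hR : IsCurv R) (X X' Y Z W : V) :
    R (X + X') Y Z W = R X Y Z W + R X' Y Z W := by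
  simpa using hR.1 1 X X' Y Z W

theorem add₂ (hR : IsCurv R) (X Y Y' Z W : V) :
    R X (Y + Y') Z W = R X Y Z W + R X Y' Z W := by
  simpa using hR.2.1 1 X Y Y' Z W

theorem add₃ (hR : IsCurv R) (X Y Z Z' W : V) :
    R X Y (Z + Z') W = R X Y Z W + R X Y Z' W := by
  simpa using hR.2.2.1 1 X Y Z Z' W

theorem smul₁ (hR : IsCurv R) (a : ℝ) (X Y Z W : V) :
    R (a • X) Y Z W = a * R X Y Z W := by
  simpa [(by simpa using hR.add₁ 0 0 Y Z W : R 0 Y Z W = 0)] using hR.1 a X 0 Y Z W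

theorem smul₂ (hR : IsCurv R) (a : ℝ) (X Y Z W : V) :
    R X (a • Y) Z W = a * R X Y Z W := by
  simpa [(by simpa using hR.add₂ X 0 0 Z W : R X 0 Z W = 0)] using hR.2.1 a X Y 0 Z W

theorem smul₃ (hR : IsCurv R) (a : ℝ) (X Y Z W : V) :
    R X Y (a • Z) W = a * R X Y Z W := by
  simpa [(by simpa using hR.add₃ X Y 0 0 W : R X Y 0 W = 0)] using hR.2.2.1 a X Y Z 0 W

theorem antisymm₁₂ (hR : IsCurv R) (X Y Z W : V) : R Y X Z W = -R X Y Z W := by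
  linarith [hR.2.2.2.2.1 X Y Z W]

theorem antisymm₃₄ (hR : IsCurv R) (X Y Z W : V) : R X Y W Z = -R X Y Z W := by
  linarith [hR.2.2.2.2.2.1 X Y Z W]

theorem pair_symm (hR : IsCurv R) (X Y Z W : V) : R X Y Z W = R Z W X Y :=
  hR.2.2.2.2.2.2.1 X Y Z W

theorem self₁₂ (hR : IsCurv R) (X Z W : V) : R X X Z W = 0 := by
  linarith [hR.antisymm₁₂ X X Z W]

theorem self₃₄ (hR : IsCurv R) (X Y Z : V) : R X Y Z Z = 0 := by
  linarith [hR.antisymm₃₄ X Y Z Z]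

end IsCurv

section Jacobi

variable {g : V →ₗ[ℝ] V →ₗ[ℝ] ℝ} {R : V → V → V → V → ℝ} {J : V → V →ₗ[ℝ] V}

theorem eq_of_forall_apply_eq (hgnd : ∀ x : V, (∀ y : V, g x y = 0) → x = 0) {A B : V}
    (h : ∀ T, g A T = g B T) : A = B :=
  sub_eq_zero.mp <| hgnd _ fun T => by simp [h]

namespace IsJacobi

theorem apply_self (hgnd : ∀ x : V, (∀ y : V, g x y = 0) → x = 0) (hR : IsCurv R)
    (hJ : IsJacobi g R J) (X : V) : J X X = 0 :=
  hgnd _ fun T => by rw [hJ]; exact hR.self₁₂ X X T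

theorem apply_orthogonal (hR : IsCurv R) (hJ : IsJacobi g R J) (X Y : V) : g (J X Y) X = 0 := by
  rw [hJ]; exact hR.self₃₄ Y X X

theorem apply_comm (hgsymm : ∀ x y : V, g x y = g y x) (hR : IsCurv R) (hJ : IsJacobi g R J)
    (X Y Z : V) : g (J X Y) Z = g Y (J X Z) := by
  rw [hgsymm Y, hJ, hJ, hR.pair_symm, hR.antisymm₁₂, hR.antisymm₃₄, neg_neg]

theorem smul_left (hgnd : ∀ x : V, (∀ y : V, g x y = 0) → x = 0) (hR : IsCurv R)
    (hJ : IsJacobi g R J) (c : ℝ) (X : V) : J (c • X) = (c * c) • J X := by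
  ext Y
  refine eq_of_forall_apply_eq hgnd fun T => ?_
  rw [LinearMap.smul_apply, map_smul, LinearMap.smul_apply, smul_eq_mul, hJ, hJ, hR.smul₂,
    hR.smul₃, mul_assoc]

theorem add_smul_add_smul (hgnd : ∀ x : V, (∀ y : V, g x y = 0) → x = 0) (hR : IsCurv R)
    (hJ : IsJacobi g R J) (a b c d : ℝ) (X Y : V) :
    J (a • X + b • Y) (c • X + d • Y) = (a * d - b * c) • (a • J X Y - b • J Y X) := by
  refine eq_of_forall_apply_eq hgnd fun T => ?_
  simp only [map_smul, map_sub, LinearMap.smul_apply, LinearMap.sub_apply, smul_eq_mul]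
  rw [hJ, hJ, hJ]
  simp only [hR.add₁, hR.add₂, hR.add₃, hR.smul₁, hR.smul₂, hR.smul₃, hR.self₁₂,
    hR.antisymm₁₂ Y X]
  ring

end IsJacobi

theorem exists_smul_unit {A : V} (hA : g A A ≠ 0) :
    ∃ c : ℝ, c ≠ 0 ∧ (g (c • A) (c • A) = 1 ∨ g (c • A) (c • A) = -1) := by
  have hpos : 0 < |g A A| := abs_pos.mpr hA
  refine ⟨(√|g A A|)⁻¹, by positivity, ?_⟩
  have hsq : (√|g A A|)⁻¹ * (√|g A A|)⁻¹ = |g A A|⁻¹ := by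
    rw [← mul_inv, Real.mul_self_sqrt hpos.le]
  simp only [map_smul, LinearMap.smul_apply, smul_eq_mul, ← mul_assoc, hsq]
  rcases hA.lt_or_gt with hneg | hpos
  · right; rw [abs_of_neg hneg]; field_simp
  · left; rw [abs_of_pos hpos]; field_simp

theorem JacobiOrthogonal.apply_apply_eq_zero (hgnd : ∀ x : V, (∀ y : V, g x y = 0) → x = 0)
    (hR : IsCurv R) (hJ : IsJacobi g R J) (horth : JacobiOrthogonal g J) {A B : V}
    (hA : g A A ≠ 0) (hB : g B B ≠ 0) (hAB : g A B = 0) : g (J A B) (J B A) = 0 := by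
  obtain ⟨c, hc0, hc⟩ := exists_smul_unit hA
  obtain ⟨d, hd0, hd⟩ := exists_smul_unit hB
  have h := horth (c • A) (d • B) hc hd (by simp [hAB])
  simpa [hJ.smul_left hgnd hR, hc0, hd0] using h

end Jacobi

open Polynomial in
theorem eq_zero_of_cubic_eq_zero_off_roots {a b c d e f : ℝ} (hd : d ≠ 0)
    (h : ∀ s : ℝ, d + e * s + f * s ^ 2 ≠ 0 → a * s + b * s ^ 2 + c * s ^ 3 = 0) : a = 0 := by
  set p : ℝ[X] := C a * X + C b * X ^ 2 + C c * X ^ 3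
  set q : ℝ[X] := C d + C e * X + C f * X ^ 2
  have hpq : p * q = 0 := Polynomial.funext fun s => by
    by_cases hs : d + e * s + f * s ^ 2 = 0
    · simp [p, q, hs]
    · simp [p, q, h s hs]
  have hq : q ≠ 0 := fun hq => hd <| by simpa [q] using congrArg (coeff · 0) hq
  simpa [p] using congrArg (coeff · 1) ((mul_eq_zero.mp hpq).resolve_right hq)

theorem eq_zero_of_forall_orthogonal {g : V →ₗ[ℝ] V →ₗ[ℝ] ℝ}
    (hgnd : ∀ x : V, (∀ y : V, g x y = 0) → x = 0) {X Z : V} (hX : g X X ≠ 0)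
    (hZX : g Z X = 0) (hZ : ∀ W, g X W = 0 → g Z W = 0) : Z = 0 := by
  refine hgnd Z fun T => ?_
  have hT : g X (T - (g X T / g X X) • X) = 0 := by
    simp only [map_sub, map_smul, smul_eq_mul]
    field_simp
    ring
  simpa [hZX] using hZ _ hT

section EigenvectorOrthogonal

variable {g : V →ₗ[ℝ] V →ₗ[ℝ] ℝ} {R : V → V → V → V → ℝ} {J : V → V →ₗ[ℝ] V} {X Y : V} {l : ℝ}

theorem apply_apply_swap_add_smul_of_eigen (hgsymm : ∀ x y : V, g x y = g y x)
    (hgnd : ∀ x : V, (∀ y : V, g x y = 0) → x = 0) (hR : IsCurv R) (hJ : IsJacobi g R J)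
    (heig : J X Y = (g X X * l) • Y) (a b c d : ℝ) :
    g (J (a • X + b • Y) (c • X + d • Y)) (J (c • X + d • Y) (a • X + b • Y)) =
      -(a * d - b * c) ^ 2 *
        (a * c * (g X X * l) ^ 2 * g Y Y + b * d * g (J Y X) (J Y X)) := by
  have hUY : g (J Y X) Y = 0 := hJ.apply_orthogonal hR Y X
  rw [hJ.add_smul_add_smul hgnd hR, hJ.add_smul_add_smul hgnd hR, heig]
  simp only [map_smul, map_sub, LinearMap.smul_apply, LinearMap.sub_apply, smul_eq_mul,
    hgsymm Y (J Y X), hUY]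
  ring

theorem apply_swap_apply_swap_of_eigen (hgsymm : ∀ x y : V, g x y = g y x)
    (hgnd : ∀ x : V, (∀ y : V, g x y = 0) → x = 0) (hR : IsCurv R) (hJ : IsJacobi g R J)
    (horth : JacobiOrthogonal g J) (hX : g X X ≠ 0) (hY : g Y Y ≠ 0) (hXY : g X Y = 0)
    (heig : J X Y = (g X X * l) • Y) :
    g (J Y X) (J Y X) = g X X * g Y Y ^ 2 * l ^ 2 := by
  -- Jacobi-orthogonality of `X + t Y` and `t ε_Y X - ε_X Y`, which are nonnull for `t = 1` or `2`.
  obtain ⟨t, ht0, ht⟩ : ∃ t : ℝ, t ≠ 0 ∧ g X X + t ^ 2 * g Y Y ≠ 0 := by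
    by_cases h : g X X + g Y Y = 0
    · exact ⟨2, two_ne_zero, fun h' => hY (by linarith)⟩
    · exact ⟨1, one_ne_zero, by simpa using h⟩
  have hplane : ∀ a b c d : ℝ,
      g (a • X + b • Y) (c • X + d • Y) = a * c * g X X + b * d * g Y Y := by
    intro a b c d
    simp only [map_add, map_smul, LinearMap.add_apply, LinearMap.smul_apply, smul_eq_mul, hXY,
      hgsymm Y X]
    ring
  have h := horth.apply_apply_eq_zero hgnd hR hJ (A := (1 : ℝ) • X + t • Y)
    (B := (t * g Y Y) • X + (-g X X) • Y)
    (by rw [hplane]; exact fun h => ht (by linear_combination h))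
    (by rw [hplane]; exact fun h => mul_ne_zero (mul_ne_zero hX hY) ht (by linear_combination h))
    (by rw [hplane]; ring)
  rw [apply_apply_swap_add_smul_of_eigen hgsymm hgnd hR hJ heig] at h
  have h' : ((g X X + t ^ 2 * g Y Y) ^ 2 * t * g X X) *
      (g (J Y X) (J Y X) - g X X * g Y Y ^ 2 * l ^ 2) = 0 := by
    linear_combination h
  exact sub_eq_zero.mp <| (mul_eq_zero.mp h').resolve_left (by positivity)

theorem exists_apply_apply_add_smul_eq_cubic (hgsymm : ∀ x y : V, g x y = g y x)
    (hR : IsCurv R) (hJ : IsJacobi g R J) (heig : J X Y = (g X X * l) • Y) (W : V) :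
    ∃ b c : ℝ, ∀ s : ℝ, g (J X (Y + s • W)) (J (Y + s • W) X) =
      (g (J Y X) (J X W) - g X X * l * g (J Y X) W) * s + b * s ^ 2 + c * s ^ 3 := by
  refine ⟨g X X * l * R X W W Y + R X Y W (J X W) + R X W Y (J X W), R X W W (J X W),
    fun s => ?_⟩
  rw [map_add, map_smul, heig]
  simp only [map_add, map_smul, LinearMap.add_apply, LinearMap.smul_apply, smul_eq_mul,
    hgsymm _ (J (Y + s • W) X)]
  rw [hJ, hJ, hJ, hJ]
  simp only [hR.add₂, hR.add₃, hR.smul₂, hR.smul₃, hR.self₃₄, hR.antisymm₃₄ X Y W Y]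
  ring

theorem apply_swap_apply_jacobi_of_eigen (hgsymm : ∀ x y : V, g x y = g y x)
    (hgnd : ∀ x : V, (∀ y : V, g x y = 0) → x = 0) (hR : IsCurv R) (hJ : IsJacobi g R J)
    (horth : JacobiOrthogonal g J) (hX : g X X ≠ 0) (hY : g Y Y ≠ 0) (hXY : g X Y = 0)
    (heig : J X Y = (g X X * l) • Y) {W : V} (hXW : g X W = 0) :
    g (J Y X) (J X W) = g X X * l * g (J Y X) W := by
  obtain ⟨b, c, hcubic⟩ := exists_apply_apply_add_smul_eq_cubic hgsymm hR hJ heig W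
  refine sub_eq_zero.mp <| eq_zero_of_cubic_eq_zero_off_roots (b := b) (c := c)
    (e := 2 * g Y W) (f := g W W) hY fun s hs => ?_
  rw [← hcubic]
  refine horth.apply_apply_eq_zero hgnd hR hJ hX ?_ (by simp [hXY, hXW])
  convert hs using 1
  simp only [map_add, map_smul, LinearMap.add_apply, LinearMap.smul_apply, smul_eq_mul,
    hgsymm W Y]
  ring

theorem apply_swap_eq_of_eigen_of_orthogonal (hgsymm : ∀ x y : V, g x y = g y x)
    (hgnd : ∀ x : V, (∀ y : V, g x y = 0) → x = 0) (hR : IsCurv R) (hJ : IsJacobi g R J)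
    (horth : JacobiOrthogonal g J)
    (hnonullEig : ∀ X : V, g X X ≠ 0 →
      ∀ (W : V) (μ : ℝ), W ≠ 0 → J X W = μ • W → g W W ≠ 0)
    (hX : g X X ≠ 0) (hXY : g X Y = 0) (heig : J X Y = (g X X * l) • Y) :
    J Y X = (g Y Y * l) • X := by
  rcases eq_or_ne Y 0 with rfl | hY0
  · simp [by simpa using hJ.smul_left hgnd hR 0 X]
  have hY := hnonullEig X hX Y _ hY0 heig
  have hUX : g (J Y X) X = g X X * g Y Y * l := by
    rw [hJ, hR.pair_symm, ← hJ, heig, map_smul, LinearMap.smul_apply, smul_eq_mul]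
    ring
  have hUU := apply_swap_apply_swap_of_eigen hgsymm hgnd hR hJ horth hX hY hXY heig
  set W := J Y X - (g Y Y * l) • X
  have hWX : g W X = 0 := by
    simp only [W, map_sub, map_smul, LinearMap.sub_apply, LinearMap.smul_apply, smul_eq_mul, hUX]
    ring
  have hWeig : J X W = (g X X * l) • W := by
    rw [← sub_eq_zero]
    refine eq_zero_of_forall_orthogonal hgnd hX ?_ fun V hV => ?_
    · simp [hJ.apply_orthogonal hR, hWX]
    · have hXJV : g X (J X V) = 0 := hgsymm X _ ▸ hJ.apply_orthogonal hR X V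
      rw [map_sub, LinearMap.sub_apply, hJ.apply_comm hgsymm hR]
      simp only [W, map_sub, map_smul, LinearMap.sub_apply, LinearMap.smul_apply, smul_eq_mul,
        hXJV, hV, apply_swap_apply_jacobi_of_eigen hgsymm hgnd hR hJ horth hX hY hXY heig hV]
      ring
  have hWW : g W W = 0 := by
    simp only [W, map_sub, map_smul, LinearMap.sub_apply, LinearMap.smul_apply, smul_eq_mul, hUX,
      hUU, hgsymm X (J Y X)]
    ring
  by_contra hne
  exact hnonullEig X hX W _ (sub_ne_zero.mpr hne) hWeig hWW

theorem apply_swap_eq_zero_of_apply_eq_zero (hgsymm : ∀ x y : V, g x y = g y x)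
    (hgnd : ∀ x : V, (∀ y : V, g x y = 0) → x = 0) (hR : IsCurv R) (hJ : IsJacobi g R J)
    (horth : JacobiOrthogonal g J)
    (hnonullEig : ∀ X : V, g X X ≠ 0 →
      ∀ (W : V) (μ : ℝ), W ≠ 0 → J X W = μ • W → g W W ≠ 0)
    (hX : g X X ≠ 0) (hJXY : J X Y = 0) : J Y X = 0 := by
  -- `Y' = Y - c X` is orthogonal to `X`, and `J_X Y' = J_X Y`, `J_{Y'} X = J_Y X + c J_X Y`.
  set c := g X Y / g X X
  have hY' : g X ((-c) • X + (1 : ℝ) • Y) = 0 := by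
    simp only [c, map_add, map_smul, smul_eq_mul]
    field_simp
    ring
  have h := apply_swap_eq_of_eigen_of_orthogonal (l := 0) hgsymm hgnd hR hJ horth hnonullEig hX
    hY' (by simp [hJXY, hJ.apply_self hgnd hR])
  have hproj : J ((-c) • X + (1 : ℝ) • Y) X = J Y X := by
    simpa [hJXY] using hJ.add_smul_add_smul hgnd hR (-c) 1 1 0 X Y
  rw [hproj] at h
  simpa using h

end EigenvectorOrthogonal

theorem stmt_8_general {V : Type*} [AddCommGroup V] [Module ℝ V]
(g : V →ₗ[ℝ] V →ₗ[ℝ] ℝ) (hgsymm : ∀ x y : V, g x y = g y x)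
    (hgnd : ∀ x : V, (∀ y : V, g x y = 0) → x = 0)
    (R : V → V → V → V → ℝ) (hR : IsCurv R)
    (J : V → V →ₗ[ℝ] V) (hJ : IsJacobi g R J)
    (horth : JacobiOrthogonal g J)
    (hnonullEig : ∀ X : V, g X X ≠ 0 →
      ∀ (W : V) (μ : ℝ), W ≠ 0 → J X W = μ • W → g W W ≠ 0) :
    JacobiDual g J := by
  intro X Y l hX heig
  have hlXY : l * g X Y = 0 := by
    have h := hJ.apply_orthogonal hR X Y
    rw [heig, map_smul, LinearMap.smul_apply, smul_eq_mul, hgsymm Y X] at h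
    simpa [hX, mul_assoc] using h
  by_cases hXY : g X Y = 0
  · exact apply_swap_eq_of_eigen_of_orthogonal hgsymm hgnd hR hJ horth hnonullEig hX hXY heig
  obtain rfl : l = 0 := (mul_eq_zero.mp hlXY).resolve_right hXY
  simpa using apply_swap_eq_zero_of_apply_eq_zero hgsymm hgnd hR hJ horth hnonullEig hX
    (by simpa using heig)

/-- a Jacobi-diagonalizable Jacobi-orthogonal R such that J_X has no null
eigenvectors for all nonnull X is Jacobi-dual. -/
theorem stmt_8 {V : Type*} [AddCommGroup V] [Module ℝ V] [FiniteDimensional ℝ V]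
(g : V →ₗ[ℝ] V →ₗ[ℝ] ℝ) (hgsymm : ∀ x y : V, g x y = g y x)
    (hgnd : ∀ x : V, (∀ y : V, g x y = 0) → x = 0)
    (R : V → V → V → V → ℝ) (hR : IsCurv R)
    (J : V → V →ₗ[ℝ] V) (hJ : IsJacobi g R J)
    (hdiag : JacobiDiagonalizable g J) (horth : JacobiOrthogonal g J)
    (hnonullEig : ∀ X : V, g X X ≠ 0 →
      ∀ (W : V) (μ : ℝ), W ≠ 0 → J X W = μ • W → g W W ≠ 0) :
    JacobiDual g J :=
  stmt_8_general g hgsymm hgnd R hR J hJ horth hnonullEig
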